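/- The electromagnetic local components F^{(α)}_{(i)j} = −(1/4)·U^{(α)}_{(i)j} of the autonomous metrical multi-time Lagrange space of electrodynamics satisfy the second and third Maxwell-type equations: for all α ∈ Fin p, i, j, k ∈ Fin n and all (t,x), the cyclic sum F^{(α)}_{(i)j|k} + F^{(α)}_{(j)k|i} + F^{(α)}_{(k)i|j} = 0, where F^{(α)}_{(i)j|k} = ∂F^{(α)}_{(i)j}/∂x^k − Σ_l γ^l_{ik}(x) F^{(α)}_{(l)j} − Σ_l γ^l_{jk}(x) F^{(α)}_{(i)l} is the spatial horizontal covariant derivative; and, since the F^{(α)}_{(i)j} do not depend on the fibre coordinates y, the cyclic sum of the vertical covariant derivatives F^{(α)}_{(i)j}|^{(γ)}_{(k)} = ∂F^{(α)}_{(i)j}/∂y^k_γ also vanishes identically. -/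

import Mathlib

/- STATEMENT 10: The electromagnetic components `F^{(α)}_{(i)j} = −(1/4)U^{(α)}_{(i)j}`
satisfy the second and third Maxwell-type equations: the cyclic sums of the spatial
horizontal covariant derivatives and of the vertical covariant derivatives vanish. -/

open scoped BigOperators

noncomputable section

def pd {m : ℕ} (f : (Fin m → ℝ) → ℝ) (a : Fin m) (t : Fin m → ℝ) : ℝ :=
  fderiv ℝ f t (Pi.single a 1)

def pdY {n p : ℕ} (f : (Fin n → Fin p → ℝ) → ℝ) (i : Fin n) (a : Fin p)
    (y : Fin n → Fin p → ℝ) : ℝ :=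
  fderiv ℝ f y (Pi.single i (Pi.single a 1))

/-- Christoffel symbols `γ^i_{jk}` of the spatial metric `g`. -/
def chS {n : ℕ} (g : (Fin n → ℝ) → Matrix (Fin n) (Fin n) ℝ)
    (i j k : Fin n) (x : Fin n → ℝ) : ℝ :=
  (1/2) * ∑ m, (g x)⁻¹ i m *
    (pd (fun z => g z m j) k x + pd (fun z => g z m k) j x - pd (fun z => g z j k) m x)

/-- `U^{(a)}_{(i)j} = ∂U^{(a)}_{(i)}/∂x^j − ∂U^{(a)}_{(j)}/∂x^i`. -/
def Ucurl {p n : ℕ} (U : Fin p → Fin n → (Fin p → ℝ) → (Fin n → ℝ) → ℝ)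
    (a : Fin p) (i j : Fin n) (t : Fin p → ℝ) (x : Fin n → ℝ) : ℝ :=
  pd (fun z => U a i t z) j x - pd (fun z => U a j t z) i x

/-- Electromagnetic components `F^{(α)}_{(i)j} = −(1/4)U^{(α)}_{(i)j}`. -/
def Fem {p n : ℕ} (U : Fin p → Fin n → (Fin p → ℝ) → (Fin n → ℝ) → ℝ)
    (a : Fin p) (i j : Fin n) (t : Fin p → ℝ) (x : Fin n → ℝ) : ℝ :=
  -(1/4) * Ucurl U a i j t x

/-- Spatial horizontal covariant derivative
`F^{(α)}_{(i)j|k} = ∂F^{(α)}_{(i)j}/∂x^k − Σ_l γ^l_{ik} F^{(α)}_{(l)j} − Σ_l γ^l_{jk} F^{(α)}_{(i)l}`. -/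
def FemCovS {p n : ℕ} (g : (Fin n → ℝ) → Matrix (Fin n) (Fin n) ℝ)
    (U : Fin p → Fin n → (Fin p → ℝ) → (Fin n → ℝ) → ℝ)
    (a : Fin p) (i j k : Fin n) (t : Fin p → ℝ) (x : Fin n → ℝ) : ℝ :=
  pd (fun z => Fem U a i j t z) k x
    - (∑ l, chS g l i k x * Fem U a l j t x)
    - (∑ l, chS g l j k x * Fem U a i l t x)


lemma pd_diff {m : ℕ} {f : (Fin m → ℝ) → ℝ} (hf : ContDiff ℝ (⊤ : ℕ∞) f) (j : Fin m) :
    Differentiable ℝ (fun z => pd f j z) := by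
  have h1 : Differentiable ℝ (fderiv ℝ f) :=
    (hf.fderiv_right (m := (⊤ : ℕ∞)) (by simp)).differentiable (by simp)
  exact h1.clm_apply (differentiable_const _)

lemma pd_smooth_swap {m : ℕ} {f : (Fin m → ℝ) → ℝ} (hf : ContDiff ℝ (⊤ : ℕ∞) f) (j k : Fin m)
    (x : Fin m → ℝ) :
    pd (fun z => pd f j z) k x = pd (fun z => pd f k z) j x := by
  have hd : DifferentiableAt ℝ (fderiv ℝ f) x :=
    ((hf.fderiv_right (m := (⊤ : ℕ∞)) (by simp)).differentiable (by simp)).differentiableAt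
  have hsymm : IsSymmSndFDerivAt ℝ f x :=
    hf.contDiffAt.isSymmSndFDerivAt (by rw [minSmoothness_of_isRCLikeNormedField]; exact WithTop.coe_le_coe.mpr le_top)
  unfold pd
  rw [fderiv_clm_apply hd (differentiableAt_const _),
      fderiv_clm_apply hd (differentiableAt_const _)]
  simp [hsymm (Pi.single k 1) (Pi.single j 1)]

lemma pd_Fem {p n : ℕ} (U : Fin p → Fin n → (Fin p → ℝ) → (Fin n → ℝ) → ℝ)
    (Usmooth : ∀ a i, ContDiff ℝ (⊤ : ℕ∞) (fun q : (Fin p → ℝ) × (Fin n → ℝ) => U a i q.1 q.2))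
    (a : Fin p) (i j k : Fin n) (t : Fin p → ℝ) (x : Fin n → ℝ) :
    pd (fun z => Fem U a i j t z) k x =
      -(1/4) * (pd (fun z => pd (fun w => U a i t w) j z) k x
        - pd (fun z => pd (fun w => U a j t w) i z) k x) := by
  have hUi : ContDiff ℝ (⊤ : ℕ∞) (fun z => U a i t z) :=
    (Usmooth a i).comp (contDiff_const.prodMk contDiff_id)
  have hUj : ContDiff ℝ (⊤ : ℕ∞) (fun z => U a j t z) :=
    (Usmooth a j).comp (contDiff_const.prodMk contDiff_id)
  have hdi := (pd_diff hUi j).differentiableAt (x := x)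
  have hdj := (pd_diff hUj i).differentiableAt (x := x)
  unfold Fem Ucurl
  conv_lhs => rw [pd]
  rw [fderiv_const_mul (show DifferentiableAt ℝ (fun z => pd (fun z => U a i t z) j z - pd (fun z => U a j t z) i z) x from hdi.sub hdj), fderiv_fun_sub hdi hdj]
  simp [pd]

lemma Fem_antisymm {p n : ℕ} (U : Fin p → Fin n → (Fin p → ℝ) → (Fin n → ℝ) → ℝ)
    (a : Fin p) (i j : Fin n) (t : Fin p → ℝ) (x : Fin n → ℝ) :
    Fem U a i j t x = -Fem U a j i t x := by
  simp [Fem, Ucurl]; ring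

lemma chS_symm {n : ℕ} (g : (Fin n → ℝ) → Matrix (Fin n) (Fin n) ℝ)
    (gsymm : ∀ x, (g x).IsSymm) (l j k : Fin n) (x : Fin n → ℝ) :
    chS g l j k x = chS g l k j x := by
  have hg : ∀ z a b, g z a b = g z b a := by
    intro z a b
    have := (gsymm z).apply b a
    simpa using this
  unfold chS
  congr 1
  apply Finset.sum_congr rfl
  intro m _
  have h1 : (fun z => g z j k) = (fun z => g z k j) := by funext z; exact hg z j k
  rw [h1]
  ring

theorem second_and_third_maxwell_equations {p n : ℕ}
    (g : (Fin n → ℝ) → Matrix (Fin n) (Fin n) ℝ)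
    (U : Fin p → Fin n → (Fin p → ℝ) → (Fin n → ℝ) → ℝ)
    (gsmooth : ∀ i j, ContDiff ℝ (⊤ : ℕ∞) (fun x => g x i j))
    (gsymm : ∀ x, (g x).IsSymm)
    (ginv : ∀ x, IsUnit (g x).det)
    (Usmooth : ∀ a i, ContDiff ℝ (⊤ : ℕ∞) (fun q : (Fin p → ℝ) × (Fin n → ℝ) => U a i q.1 q.2))
    (a : Fin p) (i j k : Fin n) (t : Fin p → ℝ) (x : Fin n → ℝ) :
    (FemCovS g U a i j k t x + FemCovS g U a j k i t x + FemCovS g U a k i j t x = 0) ∧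
    (∀ (c : Fin p) (y : Fin n → Fin p → ℝ),
      pdY (fun _ : Fin n → Fin p → ℝ => Fem U a i j t x) k c y
        + pdY (fun _ : Fin n → Fin p → ℝ => Fem U a j k t x) i c y
        + pdY (fun _ : Fin n → Fin p → ℝ => Fem U a k i t x) j c y = 0) := by
  constructor
  · have hs := Usmooth
    have hUi : ContDiff ℝ (⊤ : ℕ∞) (fun z => U a i t z) :=
      (Usmooth a i).comp (contDiff_const.prodMk contDiff_id)
    have hUj : ContDiff ℝ (⊤ : ℕ∞) (fun z => U a j t z) :=
      (Usmooth a j).comp (contDiff_const.prodMk contDiff_id)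
    have hUk : ContDiff ℝ (⊤ : ℕ∞) (fun z => U a k t z) :=
      (Usmooth a k).comp (contDiff_const.prodMk contDiff_id)
    unfold FemCovS
    rw [pd_Fem U Usmooth a i j k t x, pd_Fem U Usmooth a j k i t x,
        pd_Fem U Usmooth a k i j t x]
    rw [pd_smooth_swap hUi j k x, pd_smooth_swap hUj k i x, pd_smooth_swap hUk i j x]
    have hsum : ∀ (i' j' k' : Fin n),
        (∑ l, chS g l i' k' x * Fem U a l j' t x) =
        -(∑ l, chS g l k' i' x * Fem U a j' l t x) := by
      intro i' j' k'
      rw [← Finset.sum_neg_distrib]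
      apply Finset.sum_congr rfl
      intro l _
      rw [chS_symm g gsymm l i' k' x, Fem_antisymm U a j' l t x]
      ring
    rw [hsum i j k, hsum j k i, hsum k i j]
    ring
  · intro c y
    simp [pdY]


end
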